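/- arXiv:math/9905206 — 5 statements merged into one kernel-verified Lean document; each statement's English description precedes it below -/
import Mathlib

section
/- For every z = x + iy in the upper half-plane (y > 0) and every real t, |t/(z - t)| ≤ sqrt(1 + (x/y)^2). -/
theorem stmt_0 (z : ℂ) (hz : 0 < z.im) (t : ℝ) :
    ‖(t : ℂ) / (z - t)‖ ≤ Real.sqrt (1 + (z.re / z.im) ^ 2) := by
  set x := z.re with hx
  set y := z.im with hy
  have hy0 : y ≠ 0 := ne_of_gt hz
  have hy2 : (0:ℝ) < y ^ 2 := by positivity
  have hzt : z - t ≠ 0 := by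
    intro h
    have : (z - t).im = 0 := by rw [h]; simp
    simp [Complex.sub_im] at this
    exact hy0 this
  have hA : ‖z - t‖ ^ 2 = (x - t) ^ 2 + y ^ 2 := by
    rw [Complex.sq_norm, Complex.normSq_apply]
    simp [Complex.sub_re, Complex.sub_im]
    ring
  have hApos : (0:ℝ) < ‖z - t‖ ^ 2 := by
    rw [hA]; positivity
  rw [show (1 : ℝ) + (x / y) ^ 2 = (y ^ 2 + x ^ 2) / y ^ 2 by field_simp]
  rw [Real.le_sqrt (by positivity)]
  rw [norm_div, div_pow, Complex.sq_norm, Complex.normSq_ofReal,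
    Complex.sq_norm, ← Complex.sq_norm, hA]
  rw [div_le_div_iff₀ (by positivity) hy2]
  nlinarith [sq_nonneg (y * y - x * (t - x)), sq_nonneg (x - t), hy2]
  positivity
end

section
/- Fix η > 0, M > 0 and let φ be an analytic function on the truncated cone Γ_{η,M} = {z = x + iy : |x| < ηy, y > M} satisfying |φ(z)| ≤ ε|z| for all z ∈ Γ_{η,M}. Then for every η' < η and M' > M there exists a constant k > 0, depending only on η, η', M, M', such that |φ'(z)| ≤ kε for all z ∈ Γ_{η',M'}. -/
open Metric Complex

theorem stmt_6 (η M η' M' : ℝ) (hη : 0 < η) (hM : 0 < M) (hη' : 0 < η')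
    (hηη : η' < η) (hMM : M < M') :
    ∃ k > 0, ∀ (φ : ℂ → ℂ) (ε : ℝ), 0 < ε →
      DifferentiableOn ℂ φ {z : ℂ | M < z.im ∧ |z.re| < η * z.im} →
      (∀ z ∈ {z : ℂ | M < z.im ∧ |z.re| < η * z.im},
        ‖φ z‖ ≤ ε * ‖z‖) →
      ∀ z ∈ {z : ℂ | M' < z.im ∧ |z.re| < η' * z.im},
        ‖deriv φ z‖ ≤ k * ε := by
  set δ : ℝ := min ((M' - M) / (2 * M')) ((η - η') / (2 * (1 + η))) with hδdef
  have hδpos : 0 < δ := lt_min (div_pos (by linarith) (by linarith)) (div_pos (by linarith) (by linarith))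
  refine ⟨(1 + η' + δ) / δ, by positivity, ?_⟩
  intro φ ε hε hdiff hbound z hz
  obtain ⟨hzM, hzre⟩ := hz
  have hzim : 0 < z.im := lt_trans (lt_trans hM hMM) hzM
  set R : ℝ := δ * z.im with hRdef
  have hR : 0 < R := mul_pos hδpos hzim
  -- closed ball is inside the big cone
  have hball : closedBall z R ⊆ {w : ℂ | M < w.im ∧ |w.re| < η * w.im} := by
    intro w hw
    rw [mem_closedBall, Complex.dist_eq] at hw
    have him : |w.im - z.im| ≤ R := by
      have := Complex.abs_im_le_norm (w - z); simp only [Complex.sub_im] at this; linarith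
    have hre : |w.re - z.re| ≤ R := by
      have := Complex.abs_re_le_norm (w - z); simp only [Complex.sub_re] at this; linarith
    have h1 : z.im - R ≤ w.im := by
      have := abs_le.1 him; linarith [this.1]
    have hRsmall : R < z.im - M := by
      have h2 : δ ≤ (M' - M) / (2 * M') := min_le_left _ _
      have h3 : R ≤ (M' - M) / (2 * M') * z.im := by
        apply mul_le_mul_of_nonneg_right h2 hzim.le
      have h4 : (M' - M) / (2 * M') * z.im < z.im - M := by
        rw [div_mul_eq_mul_div, div_lt_iff₀ (by linarith)]
        nlinarith [hzM]
      linarith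
    have hwM : M < w.im := by linarith
    refine ⟨hwM, ?_⟩
    have h5 : |w.re| ≤ |z.re| + R := by
      have := abs_le.1 hre
      cases abs_cases w.re with
      | inl h => cases abs_cases z.re with
        | inl h' => linarith [this.2]
        | inr h' => linarith [this.2]
      | inr h => cases abs_cases z.re with
        | inl h' => linarith [this.1]
        | inr h' => linarith [this.1]
    have h6 : δ ≤ (η - η') / (2 * (1 + η)) := min_le_right _ _
    have h6' : δ * (2 * (1 + η)) ≤ η - η' := by
      rw [← le_div_iff₀ (by linarith)]; exact h6
    have h7 : R * (1 + η) ≤ (η - η') / 2 * z.im := by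
      rw [hRdef]; nlinarith
    calc |w.re| ≤ |z.re| + R := h5
      _ < η' * z.im + R := by linarith
      _ ≤ η * (z.im - R) := by nlinarith
      _ ≤ η * w.im := by nlinarith
  -- bound φ on the sphere
  have hsphere : ∀ w ∈ sphere z R, ‖φ w‖ ≤ ε * ((1 + η' + δ) * z.im) := by
    intro w hw
    have hw' : w ∈ closedBall z R := sphere_subset_closedBall hw
    have hwmem := hball hw'
    have h1 : ‖φ w‖ ≤ ε * ‖w‖ := hbound w hwmem
    have h2 : ‖w‖ ≤ ‖z‖ + R := by
      have := mem_closedBall.1 hw'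
      rw [Complex.dist_eq] at this
      calc ‖w‖ = ‖z + (w - z)‖ := by ring_nf
        _ ≤ ‖z‖ + ‖w - z‖ := norm_add_le _ _
        _ ≤ ‖z‖ + R := by
            have : ‖w - z‖ ≤ R := by
              rw [← Complex.dist_eq]; exact mem_closedBall.1 hw'
            linarith
    have h3 : ‖z‖ ≤ (1 + η') * z.im := by
      calc ‖z‖ ≤ |z.re| + |z.im| := Complex.norm_le_abs_re_add_abs_im z
        _ ≤ η' * z.im + z.im := by
            rw [abs_of_pos hzim]; linarith
        _ = (1 + η') * z.im := by ring
    calc ‖φ w‖ = ‖φ w‖ := rfl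
      _ ≤ ε * ‖w‖ := h1
      _ ≤ ε * ((1 + η') * z.im + R) := by nlinarith
      _ = ε * ((1 + η' + δ) * z.im) := by rw [hRdef]; ring
  have hd : DiffContOnCl ℂ φ (ball z R) := by
    apply DifferentiableOn.diffContOnCl
    apply hdiff.mono
    rwa [closure_ball z hR.ne']
  have := Complex.norm_deriv_le_of_forall_mem_sphere_norm_le hR hd hsphere
  calc ‖deriv φ z‖ = ‖deriv φ z‖ := rfl
    _ ≤ ε * ((1 + η' + δ) * z.im) / R := this
    _ = (1 + η' + δ) / δ * ε := by
        rw [hRdef]; field_simp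
end

section
/- Let ρ be a finite positive Borel measure on [0, ∞) such that y ↦ ρ((y, ∞)) is regularly varying at +∞ with index -1. Then y·ρ((y, ∞)) = o(∫_{[0,y]} t dρ(t)) as y → ∞, and y ↦ ∫_{[0,y]} t dρ(t) is slowly varying. -/
open MeasureTheory Filter

/-- A positive function `ℓ` is slowly varying at `+∞` if `ℓ(t x)/ℓ(x) → 1` as `x → ∞`
for every `t > 0`. -/
def SlowlyVarying (ℓ : ℝ → ℝ) : Prop :=
  (∀ᶠ x in atTop, 0 < ℓ x) ∧
  ∀ t > (0 : ℝ), Tendsto (fun x => ℓ (t * x) / ℓ x) atTop (nhds 1)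

theorem stmt_12 (ρ : Measure ℝ) [IsFiniteMeasure ρ] (hρ : ρ (Set.Iio 0) = 0)
    (ℓ : ℝ → ℝ) (hℓ : SlowlyVarying ℓ)
    (hreg : ∀ᶠ y in atTop, (ρ (Set.Ioi y)).toReal = y ^ (-1 : ℝ) * ℓ y) :
    Tendsto
      (fun y : ℝ => y * (ρ (Set.Ioi y)).toReal / ∫ t in Set.Icc 0 y, t ∂ρ)
      atTop (nhds 0) ∧
    SlowlyVarying (fun y : ℝ => ∫ t in Set.Icc 0 y, t ∂ρ) := by
  set U : ℝ → ℝ := fun y => ∫ t in Set.Icc 0 y, t ∂ρ with hUdef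
  set T : ℝ → ℝ := fun y => (ρ (Set.Ioi y)).toReal with hTdef
  -- integrability
  have h_int : ∀ b : ℝ, IntegrableOn (fun t : ℝ => t) (Set.Icc 0 b) ρ := fun b =>
    (continuous_id.continuousOn).integrableOn_compact isCompact_Icc
  have h_int2 : ∀ a b : ℝ, 0 ≤ a → IntegrableOn (fun t : ℝ => t) (Set.Ioc a b) ρ := by
    intro a b ha
    exact (h_int b).mono_set (fun x hx => ⟨le_trans ha hx.1.le, hx.2⟩)
  have hU0 : ∀ y : ℝ, 0 ≤ U y := fun y =>
    setIntegral_nonneg measurableSet_Icc (fun x hx => hx.1)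
  -- splitting
  have hsplit : ∀ a b : ℝ, 0 ≤ a → a ≤ b → U b = U a + ∫ t in Set.Ioc a b, t ∂ρ := by
    intro a b ha hab
    have hdisj : Disjoint (Set.Icc 0 a) (Set.Ioc a b) := by
      rw [Set.disjoint_left]
      rintro x ⟨_, hx2⟩ ⟨hx3, _⟩
      exact absurd hx2 (not_le.2 hx3)
    have := setIntegral_union (f := fun t : ℝ => t) (μ := ρ) hdisj measurableSet_Ioc
      ((h_int a)) (h_int2 a b ha)
    rw [Set.Icc_union_Ioc_eq_Icc ha hab] at this
    exact this
  have hmono : ∀ a b : ℝ, 0 ≤ a → a ≤ b → U a ≤ U b := by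
    intro a b ha hab
    rw [hsplit a b ha hab]
    have : 0 ≤ ∫ t in Set.Ioc a b, t ∂ρ :=
      setIntegral_nonneg measurableSet_Ioc (fun x hx => le_trans ha hx.1.le)
    linarith
  -- measure of Ioc
  have hIoc : ∀ a b : ℝ, a ≤ b → (ρ (Set.Ioc a b)).toReal = T a - T b := by
    intro a b hab
    have hu : Set.Ioc a b ∪ Set.Ioi b = Set.Ioi a := Set.Ioc_union_Ioi_eq_Ioi hab
    have hd : Disjoint (Set.Ioc a b) (Set.Ioi b) := by
      rw [Set.disjoint_left]; rintro x ⟨_, h2⟩ h3; exact absurd h2 (not_le.2 h3)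
    have := measure_union (μ := ρ) hd measurableSet_Ioi
    rw [hu] at this
    have h1 := measure_ne_top ρ (Set.Ioc a b)
    have h2 := measure_ne_top ρ (Set.Ioi b)
    simp only [hTdef]
    rw [this, ENNReal.toReal_add h1 h2]
    ring
  -- lower bound on the slab integral
  have hlow : ∀ a b : ℝ, 0 ≤ a → a ≤ b →
      a * (T a - T b) ≤ ∫ t in Set.Ioc a b, t ∂ρ := by
    intro a b ha hab
    rw [← hIoc a b hab]
    exact setIntegral_ge_of_const_le_real measurableSet_Ioc (measure_ne_top ρ _)
      (fun x hx => hx.1.le) (h_int2 a b ha)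
  -- upper bound on the slab integral
  have hupp : ∀ a b : ℝ, 0 ≤ a → a ≤ b → 0 ≤ b →
      (∫ t in Set.Ioc a b, t ∂ρ) ≤ b * T a := by
    intro a b ha hab hb
    have h1 : (∫ t in Set.Ioc a b, t ∂ρ) ≤ ∫ _ in Set.Ioc a b, b ∂ρ :=
      setIntegral_mono_on (h_int2 a b ha) (integrableOn_const (measure_ne_top ρ _))
        measurableSet_Ioc (fun x hx => hx.2)
    rw [setIntegral_const] at h1
    have h2 : (ρ (Set.Ioc a b)).toReal ≤ T a :=
      ENNReal.toReal_mono (measure_ne_top ρ _) (measure_mono Set.Ioc_subset_Ioi_self)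
    calc (∫ t in Set.Ioc a b, t ∂ρ) ≤ (ρ (Set.Ioc a b)).toReal • b := h1
      _ = (ρ (Set.Ioc a b)).toReal * b := by rw [smul_eq_mul]
      _ ≤ T a * b := mul_le_mul_of_nonneg_right h2 hb
      _ = b * T a := mul_comm _ _
  -- eventual identification of T with ℓ
  have hTℓ : ∀ᶠ y in atTop, y * T y = ℓ y ∧ 0 < ℓ y := by
    filter_upwards [hreg, hℓ.1, eventually_gt_atTop (0:ℝ)] with y h1 h2 h3
    refine ⟨?_, h2⟩
    rw [hTdef]
    simp only
    rw [h1, Real.rpow_neg_one]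
    field_simp
  -- Claim Q
  have Q : ∀ n : ℕ, ∀ᶠ y in atTop, (n / 4 : ℝ) * ℓ y ≤ U y := by
    intro n
    induction n with
    | zero =>
      refine Eventually.of_forall (fun y => ?_)
      simpa using hU0 y
    | succ n IH =>
      have h2 : Tendsto (fun y : ℝ => (1/2 : ℝ) * y) atTop atTop :=
        Tendsto.const_mul_atTop (by norm_num) tendsto_id
      have hhalf := hℓ.2 (1/2) (by norm_num)
      set δ : ℝ := 1 / (n + 4) with hδdef
      have hδ : ((n:ℝ) + 4) * δ = 1 := by
        rw [hδdef]; field_simp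
      have hδlt : 1 - δ < 1 := by
        have : 0 < δ := by positivity
        linarith
      filter_upwards [h2.eventually IH, h2.eventually hTℓ, hTℓ,
        hhalf.eventually (eventually_ge_nhds hδlt),
        h2.eventually (eventually_ge_atTop (0:ℝ)), eventually_ge_atTop (0:ℝ)]
        with y hIHy ⟨hTc, hℓc⟩ ⟨hTy, hℓy⟩ hratio hc0 hy0
      set c : ℝ := (1/2 : ℝ) * y with hcdef
      have hcy : c ≤ y := by rw [hcdef]; linarith
      have hUy : U y = U c + ∫ t in Set.Ioc c y, t ∂ρ := hsplit c y hc0 hcy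
      have hslab : c * (T c - T y) ≤ ∫ t in Set.Ioc c y, t ∂ρ := hlow c y hc0 hcy
      have hcT : c * T c = ℓ c := hTc
      have hcTy : c * T y = ℓ y / 2 := by
        have : y * T y = ℓ y := hTy
        rw [hcdef]
        nlinarith [this]
      have hℓc' : (1 - δ) * ℓ y ≤ ℓ c := by
        rw [le_div_iff₀ hℓy] at hratio
        linarith
      have hIH' : ((n:ℕ) / 4 : ℝ) * ℓ c ≤ U c := hIHy
      push_cast
      nlinarith [hℓc, hℓy, hℓc', hIH', hslab, hUy, hδ, hcT, hcTy]
  -- Claim A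
  have hA : ∀ C : ℝ, ∀ᶠ y in atTop, C * ℓ y ≤ U y := by
    intro C
    obtain ⟨n, hn⟩ := exists_nat_ge (4 * C)
    filter_upwards [Q n, hℓ.1] with y h1 h2
    calc C * ℓ y ≤ (n / 4 : ℝ) * ℓ y :=
          mul_le_mul_of_nonneg_right (by linarith) h2.le
      _ ≤ U y := h1
  -- positivity of U eventually
  have hUpos : ∀ᶠ y in atTop, 0 < U y := by
    filter_upwards [hA 1, hℓ.1] with y h1 h2
    nlinarith
  -- hg : ℓ / U → 0
  have hg : Tendsto (fun y => ℓ y / U y) atTop (nhds 0) := by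
    rw [NormedAddCommGroup.tendsto_nhds_zero]
    intro ε hε
    have hC : (0:ℝ) < 2 / ε := by positivity
    filter_upwards [hA (2/ε), hℓ.1] with y h1 h2
    have hUy : 0 < U y := lt_of_lt_of_le (by positivity) h1
    have hle : ℓ y / U y ≤ ℓ y / ((2/ε) * ℓ y) :=
      div_le_div_of_nonneg_left h2.le (by positivity) h1
    have heq : ℓ y / ((2/ε) * ℓ y) = ε / 2 := by
      field_simp
    rw [Real.norm_eq_abs, abs_of_nonneg (by positivity)]
    rw [heq] at hle
    linarith
  -- Part 1
  have part1 : Tendsto (fun y : ℝ => y * T y / U y) atTop (nhds 0) := by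
    apply hg.congr'
    filter_upwards [hTℓ] with y ⟨h1, _⟩
    rw [h1]
  -- main lemma for s ≥ 1
  have hmain : ∀ s : ℝ, 1 ≤ s → Tendsto (fun y => U (s * y) / U y) atTop (nhds 1) := by
    intro s hs
    have hupb : Tendsto (fun y => 1 + s * (ℓ y / U y)) atTop (nhds 1) := by
      have := (hg.const_mul s).const_add 1
      simpa using this
    apply tendsto_of_tendsto_of_tendsto_of_le_of_le' tendsto_const_nhds hupb
    · filter_upwards [hUpos, eventually_ge_atTop (0:ℝ)] with y h1 h2
      rw [le_div_iff₀ h1, one_mul]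
      exact hmono y (s*y) h2 (le_mul_of_one_le_left h2 hs)
    · filter_upwards [hUpos, hTℓ, eventually_gt_atTop (0:ℝ)] with y h1 ⟨hTy, hℓy⟩ hy
      have hsy : y ≤ s * y := le_mul_of_one_le_left hy.le hs
      have h3 : U (s * y) ≤ U y + s * ℓ y := by
        rw [hsplit y (s*y) hy.le hsy]
        have := hupp y (s*y) hy.le hsy (by positivity)
        have h4 : s * y * T y = s * ℓ y := by rw [mul_assoc, hTy]
        linarith
      rw [div_le_iff₀ h1]
      have : (1 + s * (ℓ y / U y)) * U y = U y + s * ℓ y := by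
        field_simp
      linarith [this ▸ h3]
  refine ⟨part1, hUpos, ?_⟩
  intro t ht
  rcases le_or_gt 1 t with h1t | h1t
  · exact hmain t h1t
  · have hs : 1 ≤ t⁻¹ := le_of_lt ((one_lt_inv₀ ht).2 h1t)
    have h2 : Tendsto (fun y => U (t⁻¹ * (t * y)) / U (t * y)) atTop (nhds 1) :=
      (hmain t⁻¹ hs).comp (Tendsto.const_mul_atTop ht tendsto_id)
    have h3 : Tendsto (fun y => U y / U (t * y)) atTop (nhds 1) := by
      apply h2.congr
      intro y
      congr 1
      rw [← mul_assoc, inv_mul_cancel₀ (ne_of_gt ht), one_mul]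
    have h4 := h3.inv₀ one_ne_zero
    simp only [inv_one] at h4
    apply h4.congr
    intro y
    rw [inv_div]
end

section
/- For 1 < α < 2 and 0 < ρ < 1, the function θ ↦ cot⁻¹( ((α-1)/(α+1))·cot((2-α)ρπ + (α-1)θ) ) - θ, defined on (0, π) with cot⁻¹ taking values in (0, π), has exactly one zero in (0, π). -/
open Real

/-- The inverse cotangent with values in `(0, π)`. -/
noncomputable def arccot (x : ℝ) : ℝ := π / 2 - Real.arctan x

open Set in
noncomputable def Phi (α ρ θ : ℝ) : ℝ :=
  (2-α)*ρ*π + (α-2)*θ + Real.arctan (Real.sin (2*θ) / (α + Real.cos (2*θ)))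

lemma denom_pos {α : ℝ} (hα : 1 < α) (θ : ℝ) : 0 < α + Real.cos (2*θ) := by
  nlinarith [Real.neg_one_le_cos (2*θ)]

lemma phi_hasDerivAt {α : ℝ} (hα : 1 < α) (ρ θ : ℝ) :
    HasDerivAt (Phi α ρ)
      ((α*(α-1)*((α-1)+2*Real.cos (2*θ))) / ((α + Real.cos (2*θ))^2 + (Real.sin (2*θ))^2)) θ := by
  have hd := denom_pos hα θ
  have h2 : HasDerivAt (fun x : ℝ => 2*x) 2 θ := by
    simpa using (hasDerivAt_id θ).const_mul (2:ℝ)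
  have hs : HasDerivAt (fun x : ℝ => Real.sin (2*x)) (Real.cos (2*θ) * 2) θ :=
    (Real.hasDerivAt_sin (2*θ)).comp θ h2
  have hc : HasDerivAt (fun x : ℝ => α + Real.cos (2*x)) (-Real.sin (2*θ) * 2) θ :=
    ((Real.hasDerivAt_cos (2*θ)).comp θ h2).const_add α
  have hq := hs.div hc hd.ne'
  have ha := (Real.hasDerivAt_arctan (Real.sin (2*θ) / (α + Real.cos (2*θ)))).comp θ hq
  have hlin : HasDerivAt (fun x : ℝ => (2-α)*ρ*π + (α-2)*x) (α-2) θ := by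
    simpa using ((hasDerivAt_id θ).const_mul (α-2)).const_add ((2-α)*ρ*π)
  have htot := hlin.add ha
  convert htot using 1
  · rfl
  · rfl
  · rfl
  set s := Real.sin (2*θ) with hsdef
  set c := Real.cos (2*θ) with hcdef
  have hd' : (α + c) ≠ 0 := hd.ne'
  have hD : (0:ℝ) < (α+c)^2 + s^2 := by positivity
  have hs1 : s^2 + c^2 = 1 := Real.sin_sq_add_cos_sq _
  have num : (α-2) * ((α+c)^2+s^2) + (2*c*(α+c) + 2*s^2) = α*(α-1)*((α-1)+2*c) := by
    linear_combination α * hs1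
  have e1 : 1 + (s/(α+c))^2 = ((α+c)^2+s^2)/(α+c)^2 := by field_simp
  rw [e1, one_div_div]
  rw [show α - 2 + (α + c) ^ 2 / ((α + c) ^ 2 + s ^ 2) * ((c * 2 * (α + c) - s * (-s * 2)) / (α + c) ^ 2)
      = α - 2 + (2*c*(α+c) + 2*s^2) / ((α+c)^2+s^2) by field_simp; ring]
  rw [show α - 2 + (2*c*(α+c) + 2*s^2) / ((α+c)^2+s^2)
      = ((α-2) * ((α+c)^2+s^2) + (2*c*(α+c) + 2*s^2)) / ((α+c)^2+s^2) by field_simp]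
  rw [num]

lemma phi_continuous {α : ℝ} (hα : 1 < α) (ρ : ℝ) : Continuous (Phi α ρ) := by
  have h : Continuous (fun θ : ℝ => Real.sin (2*θ) / (α + Real.cos (2*θ))) := by
    apply Continuous.div
    · exact Real.continuous_sin.comp (continuous_const.mul continuous_id)
    · exact continuous_const.add (Real.continuous_cos.comp (continuous_const.mul continuous_id))
    · exact fun x => (denom_pos hα x).ne'
  exact (continuous_const.add (continuous_const.mul continuous_id)).add
    (Real.continuous_arctan.comp h)

lemma phi_zero {α ρ : ℝ} : Phi α ρ 0 = (2-α)*ρ*π := by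
  simp [Phi]

lemma phi_pi {α ρ : ℝ} : Phi α ρ π = (2-α)*ρ*π + (α-2)*π := by
  have : Real.sin (2*π) = 0 := by
    rw [two_mul]; simpa using Real.sin_add_pi π
  simp [Phi, this]

lemma phi_existsUnique {α ρ : ℝ} (hα : α ∈ Set.Ioo (1:ℝ) 2) (hρ : ρ ∈ Set.Ioo (0:ℝ) 1) :
    ∃! θ : ℝ, θ ∈ Set.Ioo (0:ℝ) π ∧ Phi α ρ θ = 0 := by
  obtain ⟨hα1, hα2⟩ := hα
  obtain ⟨hρ0, hρ1⟩ := hρ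
  have hπ := Real.pi_pos
  set m : ℝ := -(α-1)/2 with hm
  have hm1 : -1 < m := by rw [hm]; linarith
  have hm2 : m < 1 := by rw [hm]; linarith
  set θ1 : ℝ := Real.arccos m / 2 with hθ1def
  have hc1 : Real.cos (2*θ1) = m := by
    rw [hθ1def, mul_div_cancel₀ _ (two_ne_zero)]
    exact Real.cos_arccos hm1.le hm2.le
  have hθ1pos : 0 < θ1 := by
    have := Real.arccos_pos.mpr hm2; positivity
  have hθ1lt : θ1 < π/2 := by
    have : Real.arccos m < π := by
      rw [Real.arccos_eq_pi_div_two_sub_arcsin]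
      have := Real.neg_pi_div_two_lt_arcsin.mpr hm1
      linarith
    rw [hθ1def]; linarith
  set θ2 : ℝ := π - θ1 with hθ2def
  have hθ12 : θ1 < θ2 := by rw [hθ2def]; linarith
  have hθ2lt : θ2 < π := by rw [hθ2def]; linarith
  have hc2 : Real.cos (2*θ2) = m := by
    rw [hθ2def, show 2*(π-θ1) = 2*π - 2*θ1 by ring, Real.cos_sub, Real.cos_two_pi,
      Real.sin_two_pi]
    simpa using hc1
  -- derivative sign helpers
  have hderivpos : ∀ x : ℝ, m < Real.cos (2*x) →
      0 < (α*(α-1)*((α-1)+2*Real.cos (2*x))) / ((α + Real.cos (2*x))^2 + (Real.sin (2*x))^2) := by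
    intro x hx
    apply div_pos
    · have : 0 < (α-1)+2*Real.cos (2*x) := by rw [hm] at hx; linarith
      have h0 : 0 < α := by linarith
      have h1 : 0 < α - 1 := by linarith
      positivity
    · have := denom_pos hα1 x; positivity
  have hderivneg : ∀ x : ℝ, Real.cos (2*x) < m →
      (α*(α-1)*((α-1)+2*Real.cos (2*x))) / ((α + Real.cos (2*x))^2 + (Real.sin (2*x))^2) < 0 := by
    intro x hx
    apply div_neg_of_neg_of_pos
    · have h2 : (α-1)+2*Real.cos (2*x) < 0 := by rw [hm] at hx; linarith
      have h0 : 0 < α := by linarith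
      have h1 : 0 < α - 1 := by linarith
      exact mul_neg_of_pos_of_neg (mul_pos h0 h1) h2
    · have := denom_pos hα1 x; positivity
  have hcont := phi_continuous hα1 ρ
  -- strict monotonicity pieces
  have hmono1 : StrictMonoOn (Phi α ρ) (Set.Icc 0 θ1) := by
    apply strictMonoOn_of_deriv_pos (convex_Icc _ _) hcont.continuousOn
    intro x hx
    rw [interior_Icc] at hx
    rw [(phi_hasDerivAt hα1 ρ x).deriv]
    apply hderivpos
    rw [← hc1]
    apply Real.strictAntiOn_cos ⟨by linarith [hx.1], by linarith [hx.2, hθ1lt]⟩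
      ⟨by linarith [hθ1pos], by linarith [hθ1lt]⟩ (by linarith [hx.2])
  have hanti : StrictAntiOn (Phi α ρ) (Set.Icc θ1 θ2) := by
    apply strictAntiOn_of_deriv_neg (convex_Icc _ _) hcont.continuousOn
    intro x hx
    rw [interior_Icc] at hx
    rw [(phi_hasDerivAt hα1 ρ x).deriv]
    apply hderivneg
    rcases le_or_gt (2*x) π with hle | hgt
    · rw [← hc1]
      exact Real.strictAntiOn_cos ⟨by linarith [hθ1pos], by linarith [hθ1lt]⟩
        ⟨by linarith [hθ1pos, hx.1], hle⟩ (by linarith [hx.1])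
    · have : Real.cos (2*x) = Real.cos (2*π - 2*x) := by
        rw [Real.cos_sub, Real.cos_two_pi, Real.sin_two_pi]; ring
      rw [this, ← hc1]
      apply Real.strictAntiOn_cos ⟨by linarith [hθ1pos], by linarith [hθ1lt]⟩
        ⟨by linarith [hx.2, hθ2lt], by linarith⟩
      have := hx.2
      rw [hθ2def] at this
      linarith
  have hmono2 : StrictMonoOn (Phi α ρ) (Set.Icc θ2 π) := by
    apply strictMonoOn_of_deriv_pos (convex_Icc _ _) hcont.continuousOn
    intro x hx
    rw [interior_Icc] at hx
    rw [(phi_hasDerivAt hα1 ρ x).deriv]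
    apply hderivpos
    have h1 : Real.cos (2*x) = Real.cos (2*π - 2*x) := by
      rw [Real.cos_sub, Real.cos_two_pi, Real.sin_two_pi]; ring
    rw [h1, ← hc1]
    have hx1 := hx.1
    rw [hθ2def] at hx1
    apply Real.strictAntiOn_cos ⟨by linarith [hx.2], by linarith [hx1, hθ1lt]⟩
      ⟨by linarith [hθ1pos], by linarith [hθ1lt]⟩ (by linarith)
  -- endpoint values
  have hA : 0 < (2-α)*ρ*π := by
    have : 0 < 2 - α := by linarith
    positivity
  have hP0 : 0 < Phi α ρ 0 := by rw [phi_zero]; exact hA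
  have hPpi : Phi α ρ π < 0 := by
    rw [phi_pi]
    nlinarith [mul_pos (mul_pos (show (0:ℝ) < 2-α by linarith) hπ) (show (0:ℝ) < 1-ρ by linarith)]
  have hPθ1 : 0 < Phi α ρ θ1 :=
    lt_trans hP0 (hmono1 ⟨le_refl 0, hθ1pos.le⟩ ⟨hθ1pos.le, le_refl θ1⟩ hθ1pos)
  have hPθ2 : Phi α ρ θ2 < 0 :=
    lt_trans (hmono2 ⟨le_refl θ2, hθ2lt.le⟩ ⟨hθ2lt.le, le_refl π⟩ hθ2lt) hPpi
  -- existence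
  have hivt := intermediate_value_Ioo' hθ12.le hcont.continuousOn
  have h0mem : (0:ℝ) ∈ Set.Ioo (Phi α ρ θ2) (Phi α ρ θ1) := ⟨hPθ2, hPθ1⟩
  obtain ⟨θ0, hθ0mem, hθ0⟩ := hivt h0mem
  refine ⟨θ0, ⟨⟨by linarith [hθ0mem.1, hθ1pos], by linarith [hθ0mem.2, hθ2lt]⟩, hθ0⟩, ?_⟩
  rintro y ⟨⟨hy0, hyπ⟩, hPy⟩
  -- y must lie in (θ1, θ2)
  have hy1 : θ1 < y := by
    by_contra h
    push_neg at h
    have := hmono1 ⟨le_refl 0, hθ1pos.le⟩ ⟨hy0.le, h⟩ hy0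
    rw [phi_zero, hPy] at this
    linarith
  have hy2 : y < θ2 := by
    by_contra h
    push_neg at h
    have := hmono2 ⟨h, hyπ.le⟩ ⟨hθ2lt.le, le_refl π⟩ hyπ
    rw [hPy] at this
    linarith
  exact hanti.injOn ⟨hy1.le, hy2.le⟩ ⟨hθ0mem.1.le, hθ0mem.2.le⟩ (hPy.trans hθ0.symm)

lemma phi_bounds {α ρ : ℝ} (hα : α ∈ Set.Ioo (1:ℝ) 2) (hρ : ρ ∈ Set.Ioo (0:ℝ) 1)
    {θ : ℝ} (hθ : θ ∈ Set.Ioo (0:ℝ) π) : -π < Phi α ρ θ ∧ Phi α ρ θ < π := by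
  obtain ⟨hα1, hα2⟩ := hα
  obtain ⟨hρ0, hρ1⟩ := hρ
  obtain ⟨hθ0, hθπ⟩ := hθ
  have hπ := Real.pi_pos
  have hd := denom_pos hα1 θ
  set y : ℝ := Real.sin (2*θ) / (α + Real.cos (2*θ)) with hy
  have hPhi : Phi α ρ θ = (2-α)*ρ*π + (α-2)*θ + Real.arctan y := rfl
  have hA2 : 0 < (2-α)*ρ*π := by
    have : 0 < 2-α := by linarith
    positivity
  have hA3 : (2-α)*ρ*π < (2-α)*π := by
    have : 0 < 2-α := by linarith
    nlinarith
  have hid : Real.sin θ * (α + Real.cos (2*θ)) - Real.sin (2*θ) * Real.cos θ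
      = (α-1)*Real.sin θ := by
    rw [Real.sin_two_mul, Real.cos_two_mul]; ring
  have hsθ : 0 < Real.sin θ := Real.sin_pos_of_pos_of_lt_pi hθ0 hθπ
  rcases le_or_gt θ (π/2) with hhalf | hhalf
  · -- θ ≤ π/2
    have hs2 : 0 ≤ Real.sin (2*θ) :=
      Real.sin_nonneg_of_nonneg_of_le_pi (by linarith) (by linarith)
    have hy0 : 0 ≤ y := div_nonneg hs2 hd.le
    have hA0 : 0 ≤ Real.arctan y := by
      have := Real.arctan_strictMono.monotone hy0
      rwa [Real.arctan_zero] at this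
    have hAθ : Real.arctan y ≤ θ := by
      rcases lt_or_eq_of_le hhalf with hlt | heq
      · have hcos : 0 < Real.cos θ := Real.cos_pos_of_mem_Ioo ⟨by linarith, hlt⟩
        have hytan : y ≤ Real.tan θ := by
          rw [Real.tan_eq_sin_div_cos, hy, div_le_div_iff₀ hd hcos]
          nlinarith [hid]
        have := Real.arctan_strictMono.monotone hytan
        rwa [Real.arctan_tan (by linarith) hlt] at this
      · have : Real.sin (2*θ) = 0 := by
          rw [heq, show 2*(π/2:ℝ) = π by ring, Real.sin_pi]
        rw [hy, this, zero_div, Real.arctan_zero]; linarith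
    constructor
    · rw [hPhi]
      nlinarith [mul_nonneg (show (0:ℝ) ≤ 2-α by linarith) hθ0.le]
    · rw [hPhi]
      nlinarith [mul_nonneg (show (0:ℝ) ≤ α-1 by linarith) (show (0:ℝ) ≤ π/2 - θ by linarith)]
  · -- θ > π/2
    have hcos : Real.cos θ < 0 := Real.cos_neg_of_pi_div_two_lt_of_lt hhalf (by linarith)
    have hs2 : Real.sin (2*θ) < 0 := by
      have h1 : Real.sin (2*θ - π + π) = -Real.sin (2*θ - π) := Real.sin_add_pi _
      have h2 : 0 < Real.sin (2*θ - π) :=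
        Real.sin_pos_of_pos_of_lt_pi (by linarith) (by linarith)
      have h3 : 2*θ - π + π = 2*θ := by ring
      rw [h3] at h1
      linarith
    have hyneg : y < 0 := div_neg_of_neg_of_pos hs2 hd
    have hA0 : Real.arctan y < 0 := by
      have := Real.arctan_strictMono hyneg
      rwa [Real.arctan_zero] at this
    have htan : Real.tan θ < y := by
      have key : Real.sin θ / Real.cos θ - y
          = (Real.sin θ*(α + Real.cos (2*θ)) - Real.sin (2*θ)*Real.cos θ)
            / (Real.cos θ*(α + Real.cos (2*θ))) := by
        rw [hy]
        field_simp [hcos.ne, hd.ne']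
      have hnum : 0 < Real.sin θ*(α + Real.cos (2*θ)) - Real.sin (2*θ)*Real.cos θ := by
        rw [hid]; exact mul_pos (by linarith) hsθ
      have hden : Real.cos θ*(α + Real.cos (2*θ)) < 0 := mul_neg_of_neg_of_pos hcos hd
      have : Real.sin θ / Real.cos θ - y < 0 := by
        rw [key]; exact div_neg_of_pos_of_neg hnum hden
      rw [Real.tan_eq_sin_div_cos]; linarith
    have hAlow : θ - π < Real.arctan y := by
      have h3 : Real.tan (θ - π) = Real.tan θ := Real.tan_sub_pi θ
      have h4 : Real.arctan (Real.tan (θ-π)) = θ - π :=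
        Real.arctan_tan (by linarith) (by linarith)
      have := Real.arctan_strictMono (h3 ▸ htan)
      rwa [h4] at this
    constructor
    · rw [hPhi]
      nlinarith [mul_nonneg (show (0:ℝ) ≤ α-1 by linarith) hθ0.le]
    · rw [hPhi]
      nlinarith [mul_pos (show (0:ℝ) < 2-α by linarith) (sub_pos.mpr hθπ)]

lemma phi_equiv {α ρ : ℝ} (hα : α ∈ Set.Ioo (1:ℝ) 2) (hρ : ρ ∈ Set.Ioo (0:ℝ) 1)
    {θ : ℝ} (hθ : θ ∈ Set.Ioo (0:ℝ) π) :
    (arccot ((α - 1) / (α + 1) * Real.cot ((2 - α) * ρ * π + (α - 1) * θ)) - θ = 0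
      ↔ Phi α ρ θ = 0) := by
  obtain ⟨hα1, hα2⟩ := hα
  obtain ⟨hρ0, hρ1⟩ := hρ
  obtain ⟨hθ0, hθπ⟩ := hθ
  have hπ := Real.pi_pos
  set u : ℝ := (2 - α) * ρ * π + (α - 1) * θ with hu
  have hu0 : 0 < u := by
    rw [hu]
    have h1 : 0 < (2-α)*ρ*π := by
      have : 0 < 2-α := by linarith
      positivity
    nlinarith
  have huπ : u < π := by
    rw [hu]
    have e1 : (2-α)*ρ*π < (2-α)*π := by
      nlinarith [mul_pos (mul_pos (show (0:ℝ) < 2-α by linarith) hπ)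
        (show (0:ℝ) < 1-ρ by linarith)]
    have e2 : (α-1)*θ < (α-1)*π := by
      nlinarith [mul_pos (show (0:ℝ) < α-1 by linarith) (show (0:ℝ) < π-θ by linarith)]
    linarith
  have hsu : 0 < Real.sin u := Real.sin_pos_of_pos_of_lt_pi hu0 huπ
  have hsθ : 0 < Real.sin θ := Real.sin_pos_of_pos_of_lt_pi hθ0 hθπ
  set X : ℝ := (α - 1) / (α + 1) * Real.cot u with hX
  -- Step 1: f = 0 ↔ X = cos θ / sin θ
  have step1 : arccot X - θ = 0 ↔ X = Real.cos θ / Real.sin θ := by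
    constructor
    · intro h
      have h1 : Real.arctan X = π/2 - θ := by
        unfold arccot at h; linarith
      have := congrArg Real.tan h1
      rw [Real.tan_arctan] at this
      rw [this, Real.tan_eq_sin_div_cos, Real.sin_pi_div_two_sub, Real.cos_pi_div_two_sub]
    · intro h
      have h1 : X = Real.tan (π/2 - θ) := by
        rw [Real.tan_eq_sin_div_cos, Real.sin_pi_div_two_sub, Real.cos_pi_div_two_sub]
        exact h
      have h2 : Real.arctan X = π/2 - θ := by
        rw [h1]
        exact Real.arctan_tan (by linarith) (by linarith)
      unfold arccot
      linarith
  -- Step 2: X = cos θ / sin θ ↔ F = 0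
  have hα1' : (0:ℝ) < α + 1 := by linarith
  have step2 : X = Real.cos θ / Real.sin θ ↔
      (α+1)*Real.sin u*Real.cos θ - (α-1)*Real.cos u*Real.sin θ = 0 := by
    rw [hX, Real.cot_eq_cos_div_sin, div_mul_div_comm, div_eq_div_iff (by positivity) hsθ.ne']
    constructor <;> intro h <;> nlinarith [h]
  -- Step 3: trig identity
  have step3 : ∀ C t : ℝ, (α+1)*Real.sin (C+t)*Real.cos t - (α-1)*Real.cos (C+t)*Real.sin t
      = (α + Real.cos (2*t)) * Real.sin C + Real.sin (2*t) * Real.cos C := by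
    intro C t
    rw [Real.sin_add, Real.cos_add, Real.sin_two_mul, Real.cos_two_mul]
    linear_combination (α-1) * Real.sin C * (Real.sin_sq_add_cos_sq t)
  have hub : u = ((2-α)*ρ*π + (α-2)*θ) + θ := by rw [hu]; ring
  have hd := denom_pos hα1 θ
  have hsq : (0:ℝ) < Real.sqrt (1 + (Real.sin (2*θ) / (α + Real.cos (2*θ)))^2) :=
    Real.sqrt_pos.2 (by positivity)
  have hfac : (α + Real.cos (2*θ)) * Real.sin ((2-α)*ρ*π + (α-2)*θ)
        + Real.sin (2*θ) * Real.cos ((2-α)*ρ*π + (α-2)*θ)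
      = (α + Real.cos (2*θ)) * (Real.sin ((2-α)*ρ*π + (α-2)*θ)
        + (Real.sin (2*θ) / (α + Real.cos (2*θ))) * Real.cos ((2-α)*ρ*π + (α-2)*θ)) := by
    field_simp
  have hs5 : Real.sin (Phi α ρ θ) = (Real.sin ((2-α)*ρ*π + (α-2)*θ)
        + (Real.sin (2*θ) / (α + Real.cos (2*θ))) * Real.cos ((2-α)*ρ*π + (α-2)*θ))
      / Real.sqrt (1 + (Real.sin (2*θ) / (α + Real.cos (2*θ)))^2) := by
    show Real.sin (((2-α)*ρ*π + (α-2)*θ)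
      + Real.arctan (Real.sin (2*θ) / (α + Real.cos (2*θ)))) = _
    rw [Real.sin_add, Real.sin_arctan, Real.cos_arctan]
    field_simp
  rw [step1, step2, hub, step3]
  rw [hfac, mul_eq_zero]
  have hb := phi_bounds ⟨hα1, hα2⟩ ⟨hρ0, hρ1⟩ ⟨hθ0, hθπ⟩
  have step5 : Real.sin (Phi α ρ θ) = 0 ↔ Phi α ρ θ = 0 :=
    Real.sin_eq_zero_iff_of_lt_of_lt hb.1 hb.2
  rw [← step5, hs5, div_eq_zero_iff]
  constructor
  · rintro (h | h)
    · exact absurd h hd.ne'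
    · exact Or.inl h
  · rintro (h | h)
    · exact Or.inr h
    · exact absurd h (by positivity)

theorem stmt_15 (α ρ : ℝ) (hα : α ∈ Set.Ioo (1 : ℝ) 2) (hρ : ρ ∈ Set.Ioo (0 : ℝ) 1) :
    ∃! θ : ℝ, θ ∈ Set.Ioo (0 : ℝ) π ∧
      arccot ((α - 1) / (α + 1) * Real.cot ((2 - α) * ρ * π + (α - 1) * θ)) - θ = 0 := by
  obtain ⟨θ0, ⟨hmem, hphi⟩, huniq⟩ := phi_existsUnique hα hρ
  refine ⟨θ0, ⟨hmem, (phi_equiv hα hρ hmem).mpr hphi⟩, ?_⟩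
  rintro y ⟨hy, hf⟩
  exact huniq y ⟨hy, (phi_equiv hα hρ hy).mp hf⟩
end

section
/- Fix α ∈ (0, 1). The function S(ζ) = ((-ζ)/(1-ζ))^{(1/α) - 1}, defined for ζ ∈ (-∞, 0), satisfies: if χ(ζ) = -(-ζ)^{1/α}(1-ζ)^{1 - 1/α}, then for all ζ < 0, χ(ζ) = ζ·S(ζ), and the map ζ ↦ χ(ζ) is a strictly increasing bijection from (-∞, 0) onto (-∞, 0). -/
private lemma stmt17_eq (α ζ : ℝ) (hα : 0 < α) (hζ : ζ < 0) :
    -((-ζ) ^ (1 / α) * (1 - ζ) ^ (1 - 1 / α)) = ζ * ((-ζ) / (1 - ζ)) ^ (1 / α - 1) := by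
  have h1 : (0:ℝ) < -ζ := by linarith
  have h2 : (0:ℝ) < 1 - ζ := by linarith
  have e1 : (-ζ) ^ (1 / α) = (-ζ) ^ (1 / α - 1) * (-ζ) := by
    rw [← Real.rpow_add_one h1.ne']; ring_nf
  have e2 : (1 - ζ) ^ (1 - 1 / α) = ((1 - ζ) ^ (1 / α - 1))⁻¹ := by
    rw [← Real.rpow_neg h2.le]; ring_nf
  rw [e1, e2, Real.div_rpow h1.le h2.le, div_eq_mul_inv]
  ring

private lemma stmt17_key (α a b : ℝ) (hα : α ∈ Set.Ioo (0:ℝ) 1) (ha : a < 0) (hb : b < 0)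
    (hab : a < b) :
    a * ((-a) / (1 - a)) ^ (1 / α - 1) < b * ((-b) / (1 - b)) ^ (1 / α - 1) := by
  obtain ⟨hα0, hα1⟩ := hα
  have hβ : 0 < 1 / α - 1 := by
    have : 1 < 1 / α := by rw [lt_div_iff₀ hα0]; linarith
    linarith
  have h1a : (0:ℝ) < -a := by linarith
  have h2a : (0:ℝ) < 1 - a := by linarith
  have h1b : (0:ℝ) < -b := by linarith
  have h2b : (0:ℝ) < 1 - b := by linarith
  have hbase : (-b) / (1 - b) < (-a) / (1 - a) := by
    rw [div_lt_div_iff₀ h2b h2a]; nlinarith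
  have hbasepos : (0:ℝ) < (-b) / (1 - b) := div_pos h1b h2b
  have hpow : ((-b) / (1 - b)) ^ (1 / α - 1) < ((-a) / (1 - a)) ^ (1 / α - 1) :=
    Real.rpow_lt_rpow hbasepos.le hbase hβ
  have hpb : (0:ℝ) < ((-b) / (1 - b)) ^ (1 / α - 1) := Real.rpow_pos_of_pos hbasepos _
  nlinarith

theorem stmt_17 (α : ℝ) (hα : α ∈ Set.Ioo (0 : ℝ) 1) :
    (∀ ζ < (0 : ℝ),
      -((-ζ) ^ (1 / α) * (1 - ζ) ^ (1 - 1 / α)) = ζ * ((-ζ) / (1 - ζ)) ^ (1 / α - 1)) ∧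
    StrictMonoOn (fun ζ : ℝ => -((-ζ) ^ (1 / α) * (1 - ζ) ^ (1 - 1 / α))) (Set.Iio 0) ∧
    Set.BijOn (fun ζ : ℝ => -((-ζ) ^ (1 / α) * (1 - ζ) ^ (1 - 1 / α)))
      (Set.Iio 0) (Set.Iio 0) := by
  obtain ⟨hα0, hα1⟩ := hα
  have hβ : 0 < 1 / α - 1 := by
    have : 1 < 1 / α := by rw [lt_div_iff₀ hα0]; linarith
    linarith
  set f : ℝ → ℝ := fun ζ : ℝ => -((-ζ) ^ (1 / α) * (1 - ζ) ^ (1 - 1 / α)) with hf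
  have heq : ∀ ζ < (0:ℝ), f ζ = ζ * ((-ζ) / (1 - ζ)) ^ (1 / α - 1) :=
    fun ζ hζ => stmt17_eq α ζ hα0 hζ
  have hmono : StrictMonoOn f (Set.Iio 0) := by
    intro a ha b hb hab
    rw [heq a ha, heq b hb]
    exact stmt17_key α a b ⟨hα0, hα1⟩ ha hb hab
  refine ⟨heq, hmono, ?_, hmono.injOn, ?_⟩
  · -- MapsTo
    intro ζ hζ
    have h1 : (0:ℝ) < -ζ := by simp at hζ; linarith
    have h2 : (0:ℝ) < 1 - ζ := by linarith
    have : 0 < (-ζ) ^ (1 / α) * (1 - ζ) ^ (1 - 1 / α) :=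
      mul_pos (Real.rpow_pos_of_pos h1 _) (Real.rpow_pos_of_pos h2 _)
    simpa [hf] using neg_neg_iff_pos.mpr this
  · -- SurjOn
    intro y hy
    have hy0 : y < 0 := hy
    -- lower bound: f ζ ≥ ζ for ζ < 0
    have hub : ∀ ζ < (0:ℝ), ζ ≤ f ζ := by
      intro ζ hζ
      have h1 : (0:ℝ) < -ζ := by linarith
      have h2 : (0:ℝ) < 1 - ζ := by linarith
      rw [heq ζ hζ]
      have hS1 : ((-ζ) / (1 - ζ)) ^ (1 / α - 1) ≤ 1 :=
        Real.rpow_le_one (div_nonneg h1.le h2.le)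
          (by rw [div_le_one h2]; linarith) hβ.le
      nlinarith
    -- upper bound far left
    set c : ℝ := (2:ℝ) ^ (1 / α - 1) with hc
    have hcpos : (0:ℝ) < c := Real.rpow_pos_of_pos two_pos _
    set L : ℝ := min (-1) (y * c) with hL
    have hL0 : L < 0 := lt_of_le_of_lt (min_le_left _ _) (by norm_num)
    have hfL : f L ≤ y := by
      have h1 : (0:ℝ) < -L := by linarith
      have h2 : (0:ℝ) < 1 - L := by linarith
      have hL1 : L ≤ -1 := min_le_left _ _
      have hLy : L ≤ y * c := min_le_right _ _
      rw [heq L hL0]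
      have hbase : (2:ℝ)⁻¹ ≤ (-L) / (1 - L) := by
        rw [le_div_iff₀ h2]; nlinarith
      have hS : c⁻¹ ≤ ((-L) / (1 - L)) ^ (1 / α - 1) := by
        have := Real.rpow_le_rpow (by norm_num : (0:ℝ) ≤ 2⁻¹) hbase hβ.le
        rwa [Real.inv_rpow (by norm_num : (0:ℝ) ≤ 2), ← hc] at this
      have hSpos : (0:ℝ) < ((-L) / (1 - L)) ^ (1 / α - 1) :=
        Real.rpow_pos_of_pos (div_pos h1 h2) _
      have h3 : L * ((-L) / (1 - L)) ^ (1 / α - 1) ≤ L * c⁻¹ :=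
        mul_le_mul_of_nonpos_left hS hL0.le
      have h4 : L * c⁻¹ ≤ y := by
        have h5 := mul_le_mul_of_nonneg_right hLy (inv_nonneg.mpr hcpos.le)
        rwa [mul_assoc, mul_inv_cancel₀ hcpos.ne', mul_one] at h5
      linarith
    -- right endpoint
    set R : ℝ := max y (-1) with hR
    have hR0 : R < 0 := max_lt hy0 (by norm_num)
    have hfR : y ≤ f R := le_trans (le_max_left _ _) (hub R hR0)
    have hLR : L ≤ R := le_trans (min_le_left _ _) (le_max_right _ _)
    -- continuity
    have hcont : ContinuousOn f (Set.Iio 0) := by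
      have c1 : ContinuousOn (fun ζ : ℝ => (-ζ) ^ (1 / α)) (Set.Iio 0) :=
        (continuous_neg.continuousOn).rpow_const
          (fun x hx => Or.inl (by simp at hx ⊢; linarith))
      have c2 : ContinuousOn (fun ζ : ℝ => (1 - ζ) ^ (1 - 1 / α)) (Set.Iio 0) :=
        ((continuous_const.sub continuous_id).continuousOn).rpow_const
          (fun x hx => Or.inl (by simp at hx ⊢; intro h; linarith))
      exact (c1.mul c2).neg
    have hsub : Set.Icc L R ⊆ Set.Iio 0 := fun x hx => lt_of_le_of_lt hx.2 hR0
    have := intermediate_value_Icc hLR (hcont.mono hsub)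
    obtain ⟨ζ, hζmem, hζeq⟩ := this ⟨hfL, hfR⟩
    exact ⟨ζ, hsub hζmem, hζeq⟩
end
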